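/- Let f : [n]^k → {−1,0,1}^k × {±1} be a monotone sign function and p a monotone PI function over [n]^k such that f and p are consistent in the last coordinate (p(x)_{k+1} ∈ {±1} implies f(x)_{k+1} = p(x)_{k+1}). Define f|_p : [n]^k → {−1,0,1}^k × {±1} by f|_p(x)_{k+1} = f(x)_{k+1} and, for i ∈ [k]: f|_p(x)_i = p(x)_i if p(x)_i ∈ {−1,0,1}; f|_p(x)_i = max(f(x)_i, 0) if p(x)_i = ≥; f|_p(x)_i = min(f(x)_i, 0) if p(x)_i = ≤; and f|_p(x)_i = f(x)_i if p(x)_i = ◇. Then f|_p is a monotone sign function and f|_p is consistent with p (f|_p ⇒ p). -/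
import Mathlib


/-- Symbols of the partial-information alphabet: −1, 0, 1, ≤, ≥, ◇. -/
inductive PISym : Type where
  | neg | zero | pos | sle | sge | dia
deriving DecidableEq

/-- Points of the `k`-dimensional grid, as integer vectors. -/
abbrev Pt (k : ℕ) := Fin k → ℤ

/-- `x ∈ [n]^k`. -/
def inGrid (n k : ℕ) (x : Pt k) : Prop := ∀ i, 1 ≤ x i ∧ x i ≤ (n : ℤ)

/-- The `i`-th standard unit vector. -/
def eVec (k : ℕ) (i : Fin k) : Pt k := fun j => if j = i then 1 else 0

/-- A slice of `[n]^k`: `none` marks a free coordinate. -/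
abbrev Slice (k : ℕ) := Fin k → Option ℤ

def fullSlice (k : ℕ) : Slice k := fun _ => none

def validSlice (n : ℕ) {k : ℕ} (s : Slice k) : Prop :=
  ∀ i v, s i = some v → 1 ≤ v ∧ v ≤ (n : ℤ)

def inSlice {k : ℕ} (s : Slice k) (x : Pt k) : Prop :=
  ∀ i v, s i = some v → x i = v

/-- Monotone partial-information function (Definition 2.4). -/
def MonoPI (n k : ℕ) (p1 : Pt k → Fin k → PISym) (p2 : Pt k → PISym) : Prop :=
  (∀ x, inGrid n k x → p2 x = PISym.pos ∨ p2 x = PISym.neg ∨ p2 x = PISym.dia) ∧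
  (∀ x y, inGrid n k x → inGrid n k y → ∀ i : Fin k,
    (p1 x i = PISym.pos → x ≤ y → y i = x i →
      p1 y i = PISym.pos ∧
        (y i < (n : ℤ) → p1 (y + eVec k i) i ∈ ({PISym.pos, PISym.zero, PISym.sge} : Set PISym))) ∧
    (p1 x i = PISym.neg → y ≤ x → y i = x i →
      p1 y i = PISym.neg ∧
        (1 < y i → p1 (y - eVec k i) i ∈ ({PISym.neg, PISym.zero, PISym.sle} : Set PISym))) ∧
    (p1 x i = PISym.zero → y ≤ x → y i = x i →
      p1 y i ∈ ({PISym.zero, PISym.neg, PISym.sle} : Set PISym)) ∧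
    (p1 x i = PISym.zero → x ≤ y → y i = x i →
      p1 y i ∈ ({PISym.zero, PISym.pos, PISym.sge} : Set PISym)) ∧
    (p1 x i = PISym.sle → y ≤ x → y i = x i → p1 y i ∈ ({PISym.neg, PISym.sle} : Set PISym)) ∧
    (p1 x i = PISym.sge → x ≤ y → y i = x i → p1 y i ∈ ({PISym.pos, PISym.sge} : Set PISym))) ∧
  (∀ x, inGrid n k x → ∀ i : Fin k,
    (x i = 1 → p1 x i ∈ ({PISym.zero, PISym.pos, PISym.sge} : Set PISym)) ∧
    (x i = (n : ℤ) → p1 x i ∈ ({PISym.zero, PISym.neg, PISym.sle} : Set PISym))) ∧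
  (∀ x y, inGrid n k x → inGrid n k y → x ≤ y →
    (p2 x = PISym.pos → p2 y = PISym.pos) ∧ (p2 y = PISym.neg → p2 x = PISym.neg))

/-- Postfixed points of a PI function on a slice. -/
def Post (n k : ℕ) (p1 : Pt k → Fin k → PISym) (s : Slice k) : Set (Pt k) :=
  {x | inGrid n k x ∧ inSlice s x ∧
       ∀ i, s i = none → p1 x i ∈ ({PISym.pos, PISym.zero, PISym.sge} : Set PISym)}

/-- Prefixed points of a PI function on a slice. -/
def Pre (n k : ℕ) (p1 : Pt k → Fin k → PISym) (s : Slice k) : Set (Pt k) :=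
  {x | inGrid n k x ∧ inSlice s x ∧
       ∀ i, s i = none → p1 x i ∈ ({PISym.neg, PISym.zero, PISym.sle} : Set PISym)}

/-- Safe PI functions (Definition 2.8). -/
def SafePI (n k : ℕ) (p1 : Pt k → Fin k → PISym) (p2 : Pt k → PISym) : Prop :=
  MonoPI n k p1 p2 ∧
  ∀ s : Slice k, validSlice n s →
    (∀ J, IsGreatest (Post n k p1 s) J →
      ∀ x, inGrid n k x → inSlice s x → x ≤ J → x ≠ J →
        (∀ i, s i = none → x i < J i →
          p1 x i ∈ ({PISym.neg, PISym.zero, PISym.pos} : Set PISym)) ∧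
        (∃ i, s i = none ∧ x i < J i ∧ p1 x i = PISym.pos)) ∧
    (∀ M, IsLeast (Pre n k p1 s) M →
      ∀ x, inGrid n k x → inSlice s x → M ≤ x → x ≠ M →
        (∀ i, s i = none → M i < x i →
          p1 x i ∈ ({PISym.neg, PISym.zero, PISym.pos} : Set PISym)) ∧
        (∃ i, s i = none ∧ M i < x i ∧ p1 x i = PISym.neg))

/-- `x^{−i}` for `i ∈ [k]`. -/
def dminus {k : ℕ} (i : Fin k) (x : Pt k) : Pt k :=
  fun j => if j ≠ i ∧ 1 < x j then x j - 1 else x j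

/-- `x^{−(k+1)}`. -/
def dminusAll {k : ℕ} (x : Pt k) : Pt k :=
  fun j => if 1 < x j then x j - 1 else x j

/-- `x^{+i}` for `i ∈ [k]`. -/
def dplus (n : ℕ) {k : ℕ} (i : Fin k) (x : Pt k) : Pt k :=
  fun j => if j ≠ i ∧ x j < (n : ℤ) then x j + 1 else x j

/-- `x^{+(k+1)}`. -/
def dplusAll (n : ℕ) {k : ℕ} (x : Pt k) : Pt k :=
  fun j => if x j < (n : ℤ) then x j + 1 else x j

def IntPlus {k : ℕ} (p1 : Pt k → Fin k → PISym) (i : Fin k) : Set (Pt k) :=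
  {x | p1 (dminus i x) i = PISym.pos}

def IntPlusLast {k : ℕ} (p1 : Pt k → Fin k → PISym) (p2 : Pt k → PISym) : Set (Pt k) :=
  {x | p2 (dminusAll x) = PISym.pos ∨
    ∃ i, p1 (dminus i x) i ∈ ({PISym.pos, PISym.zero, PISym.sge} : Set PISym) ∧
         p2 (dminus i x) = PISym.pos}

def IntMinus (n : ℕ) {k : ℕ} (p1 : Pt k → Fin k → PISym) (i : Fin k) : Set (Pt k) :=
  {x | p1 (dplus n i x) i = PISym.neg}

def IntMinusLast (n : ℕ) {k : ℕ} (p1 : Pt k → Fin k → PISym) (p2 : Pt k → PISym) : Set (Pt k) :=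
  {x | p2 (dplusAll n x) = PISym.neg ∨
    ∃ i, p1 (dplus n i x) i ∈ ({PISym.neg, PISym.zero, PISym.sle} : Set PISym) ∧
         p2 (dplus n i x) = PISym.neg}

/-- `Cand⁺(p)` relative to `J = J(p)` and `M = M(p)`. -/
def CandPlus (n k : ℕ) (p1 : Pt k → Fin k → PISym) (p2 : Pt k → PISym) (J M : Pt k) :
    Set (Pt k) :=
  {x | inGrid n k x ∧ J ≤ x ∧ x ≤ M ∧
    (∀ i, p1 x i ≠ PISym.neg ∧ x ∉ IntPlus p1 i) ∧
    p2 x ≠ PISym.neg ∧ x ∉ IntPlusLast p1 p2}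

/-- `Cand⁻(p)` relative to `J = J(p)` and `M = M(p)`. -/
def CandMinus (n k : ℕ) (p1 : Pt k → Fin k → PISym) (p2 : Pt k → PISym) (J M : Pt k) :
    Set (Pt k) :=
  {x | inGrid n k x ∧ J ≤ x ∧ x ≤ M ∧
    (∀ i, p1 x i ≠ PISym.pos ∧ x ∉ IntMinus n p1 i) ∧
    p2 x ≠ PISym.pos ∧ x ∉ IntMinusLast n p1 p2}

/-- The information partial order on symbols: `symDom a b` means `a ⇒ b`. -/
def symDom (a b : PISym) : Prop :=
  b = PISym.dia ∨ a = b ∨ (a = PISym.pos ∧ b = PISym.sge) ∨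
  (a = PISym.zero ∧ (b = PISym.sge ∨ b = PISym.sle)) ∨ (a = PISym.neg ∧ b = PISym.sle)

/-- `p ⇒ p'`: `p` dominates (is more informative than) `p'`. -/
def PIdom (n k : ℕ) (p1 : Pt k → Fin k → PISym) (p2 : Pt k → PISym)
    (q1 : Pt k → Fin k → PISym) (q2 : Pt k → PISym) : Prop :=
  ∀ x, inGrid n k x → (∀ i, symDom (p1 x i) (q1 x i)) ∧ symDom (p2 x) (q2 x)

/-- A sign value `a ∈ {−1,0,1}` is consistent with a symbol `b`. -/
def consS (a : ℤ) (b : PISym) : Prop :=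
  match b with
  | PISym.dia => True
  | PISym.pos => a = 1
  | PISym.neg => a = -1
  | PISym.zero => a = 0
  | PISym.sge => a = 0 ∨ a = 1
  | PISym.sle => a = -1 ∨ a = 0

/-- A sign function `f` is consistent with the PI function `p` (i.e., `f ⇒ p`). -/
def SignCons (n k : ℕ) (f1 : Pt k → Pt k) (f2 : Pt k → ℤ)
    (p1 : Pt k → Fin k → PISym) (p2 : Pt k → PISym) : Prop :=
  ∀ x, inGrid n k x → (∀ i, consS (f1 x i) (p1 x i)) ∧ consS (f2 x) (p2 x)

/-- Monotone sign function: `x ↦ (x + f1 x, f2 x)` is well defined and monotone. -/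
def MonoSign (n k : ℕ) (f1 : Pt k → Pt k) (f2 : Pt k → ℤ) : Prop :=
  (∀ x, inGrid n k x →
    (∀ i, f1 x i = -1 ∨ f1 x i = 0 ∨ f1 x i = 1) ∧ (f2 x = 1 ∨ f2 x = -1)) ∧
  (∀ x, inGrid n k x → inGrid n k (x + f1 x)) ∧
  (∀ a b, inGrid n k a → inGrid n k b → a ≤ b → a + f1 a ≤ b + f1 b ∧ f2 a ≤ f2 b)

def PostF (n k : ℕ) (f1 : Pt k → Pt k) (s : Slice k) : Set (Pt k) :=
  {x | inGrid n k x ∧ inSlice s x ∧ ∀ i, s i = none → 0 ≤ f1 x i}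

def PreF (n k : ℕ) (f1 : Pt k → Pt k) (s : Slice k) : Set (Pt k) :=
  {x | inGrid n k x ∧ inSlice s x ∧ ∀ i, s i = none → f1 x i ≤ 0}

/-- Safe sign functions (conditions (1') and (2') of Definition 2.8). -/
def SafeSign (n k : ℕ) (f1 : Pt k → Pt k) (f2 : Pt k → ℤ) : Prop :=
  MonoSign n k f1 f2 ∧
  ∀ s : Slice k, validSlice n s →
    (∀ J, IsGreatest (PostF n k f1 s) J →
      ∀ x, inGrid n k x → inSlice s x → x ≤ J → x ≠ J →
        ∃ i, s i = none ∧ x i < J i ∧ f1 x i = 1) ∧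
    (∀ M, IsLeast (PreF n k f1 s) M →
      ∀ x, inGrid n k x → inSlice s x → M ≤ x → x ≠ M →
        ∃ i, s i = none ∧ M i < x i ∧ f1 x i = -1)

/-- The revealed solutions of a PI function. -/
def SolPI (n k : ℕ) (p1 : Pt k → Fin k → PISym) (p2 : Pt k → PISym) : Set (Pt k) :=
  {x | inGrid n k x ∧
    (((∀ i, p1 x i ∈ ({PISym.pos, PISym.zero, PISym.sge} : Set PISym)) ∧ p2 x = PISym.pos) ∨
     ((∀ i, p1 x i ∈ ({PISym.neg, PISym.zero, PISym.sle} : Set PISym)) ∧ p2 x = PISym.neg))}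

/-- `x ≪_s y` : `x ⪯ y` with strict inequality in every free coordinate of `s`. -/
def lls {k : ℕ} (s : Slice k) (x y : Pt k) : Prop :=
  x ≤ y ∧ ∀ i, s i = none → x i < y i

/-- `s` is a slice witnessing `ŝ(x,p) ≠ nil`: `x ∈ L_s` and `x ≪_s J_s(p)`. -/
def HasSlice (n k : ℕ) (p1 : Pt k → Fin k → PISym) (x : Pt k) (s : Slice k) : Prop :=
  validSlice n s ∧ inSlice s x ∧ ∃ J, IsGreatest (Post n k p1 s) J ∧ lls s x J

/-- `s = ŝ(x,p)`: `s` is the maximal slice with `x ∈ L_s` and `x ≪_s J_s(p)`. -/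
def MaxSlice (n k : ℕ) (p1 : Pt k → Fin k → PISym) (x : Pt k) (s : Slice k) : Prop :=
  HasSlice n k p1 x s ∧
  ∀ s', HasSlice n k p1 x s' → ∀ i, s' i = none → s i = none

/-- Lemma A.3: `f|_p` is a monotone sign function consistent with `p`. -/
theorem stmt18 (n k : ℕ) (f1 : Pt k → Pt k) (f2 : Pt k → ℤ)
    (p1 : Pt k → Fin k → PISym) (p2 : Pt k → PISym)
    (hf : MonoSign n k f1 f2) (hp : MonoPI n k p1 p2)
    (hcons : ∀ x, inGrid n k x →
      (p2 x = PISym.pos → f2 x = 1) ∧ (p2 x = PISym.neg → f2 x = -1)) :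
    let g1 : Pt k → Pt k := fun x i =>
      match p1 x i with
      | PISym.neg => -1
      | PISym.zero => 0
      | PISym.pos => 1
      | PISym.sge => max (f1 x i) 0
      | PISym.sle => min (f1 x i) 0
      | PISym.dia => f1 x i
    MonoSign n k g1 f2 ∧ SignCons n k g1 f2 p1 p2 := by
  intro g1
  obtain ⟨hfv, hfg, hfm⟩ := hf
  obtain ⟨hp2v, hpm, hpb, hp2m⟩ := hp
  have hg : ∀ x i, g1 x i = match p1 x i with
      | PISym.neg => -1
      | PISym.zero => 0
      | PISym.pos => 1
      | PISym.sge => max (f1 x i) 0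
      | PISym.sle => min (f1 x i) 0
      | PISym.dia => f1 x i := fun x i => rfl
  have hgneg : ∀ x i, p1 x i = PISym.neg → g1 x i = -1 := by
    intro x i h; rw [hg x i, h]
  have hgzero : ∀ x i, p1 x i = PISym.zero → g1 x i = 0 := by
    intro x i h; rw [hg x i, h]
  have hgpos : ∀ x i, p1 x i = PISym.pos → g1 x i = 1 := by
    intro x i h; rw [hg x i, h]
  have hgsge : ∀ x i, p1 x i = PISym.sge → g1 x i = max (f1 x i) 0 := by
    intro x i h; rw [hg x i, h]
  have hgsle : ∀ x i, p1 x i = PISym.sle → g1 x i = min (f1 x i) 0 := by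
    intro x i h; rw [hg x i, h]
  have hgdia : ∀ x i, p1 x i = PISym.dia → g1 x i = f1 x i := by
    intro x i h; rw [hg x i, h]
  have hF : ∀ x, inGrid n k x → ∀ i, -1 ≤ f1 x i ∧ f1 x i ≤ 1 := by
    intro x hx i
    rcases (hfv x hx).1 i with h | h | h <;> omega
  have hG : ∀ x, inGrid n k x → ∀ i, -1 ≤ g1 x i ∧ g1 x i ≤ 1 := by
    intro x hx i
    have hb := hF x hx i
    cases hpi : p1 x i <;> simp only [hgneg, hgzero, hgpos, hgsge, hgsle, hgdia, hpi]
    · omega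
    · omega
    · omega
    · exact ⟨le_min hb.1 (by norm_num), (min_le_right _ _).trans (by norm_num)⟩
    · exact ⟨le_trans (by norm_num) (le_max_right _ _), max_le hb.2 (by norm_num)⟩
    · omega
  have key : ∀ a b, inGrid n k a → inGrid n k b → a ≤ b → ∀ i,
      a i + g1 a i ≤ b i + g1 b i := by
    intro a b ha hb hab i
    have hfab : a i + f1 a i ≤ b i + f1 b i := by
      have h := (hfm a b ha hb hab).1 i
      simpa using h
    have hFa := hF a ha i
    have hFb := hF b hb i
    have hGa := hG a ha i
    have hGb := hG b hb i
    have habi : a i ≤ b i := hab i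
    rcases eq_or_lt_of_le habi with hE | hlt
    · -- same i-coordinate
      have H := hpm a b ha hb i
      have H' := hpm b a hb ha i
      have C1 : p1 a i = PISym.pos → p1 b i = PISym.pos :=
        fun h => (H.1 h hab hE.symm).1
      have C2 : p1 b i = PISym.neg → p1 a i = PISym.neg :=
        fun h => (H'.2.1 h hab hE).1
      have C3 : p1 b i = PISym.zero →
          p1 a i = PISym.zero ∨ p1 a i = PISym.neg ∨ p1 a i = PISym.sle := by
        intro h
        have h2 := H'.2.2.1 h hab hE
        simpa using h2
      have C4 : p1 a i = PISym.zero →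
          p1 b i = PISym.zero ∨ p1 b i = PISym.pos ∨ p1 b i = PISym.sge := by
        intro h
        have h2 := H.2.2.2.1 h hab hE.symm
        simpa using h2
      have C5 : p1 b i = PISym.sle → p1 a i = PISym.neg ∨ p1 a i = PISym.sle := by
        intro h
        have h2 := H'.2.2.2.2.1 h hab hE
        simpa using h2
      have C6 : p1 a i = PISym.sge → p1 b i = PISym.pos ∨ p1 b i = PISym.sge := by
        intro h
        have h2 := H.2.2.2.2.2 h hab hE.symm
        simpa using h2
      have hfab' : f1 a i ≤ f1 b i := by omega
      have m1 : min (f1 a i) 0 ≤ min (f1 b i) 0 := min_le_min hfab' le_rfl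
      have m2 : max (f1 a i) 0 ≤ max (f1 b i) 0 := max_le_max hfab' le_rfl
      have m3 : min (f1 a i) 0 ≤ f1 a i := min_le_left _ _
      have m4 : min (f1 a i) 0 ≤ 0 := min_le_right _ _
      have m5 : f1 b i ≤ max (f1 b i) 0 := le_max_left _ _
      have m6 : (0 : ℤ) ≤ max (f1 b i) 0 := le_max_right _ _
      have m7 : max (f1 a i) 0 ≤ 1 := max_le hFa.2 (by norm_num)
      have m8 : (-1 : ℤ) ≤ min (f1 b i) 0 := le_min hFb.1 (by norm_num)
      cases hpa : p1 a i <;> cases hpb : p1 b i <;>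
        simp only [hgneg, hgzero, hgpos, hgsge, hgsle, hgdia, hpa, hpb] <;>
        simp [hpa, hpb] at C1 C2 C3 C4 C5 C6 <;>
        omega
    · rcases eq_or_lt_of_le (by omega : a i + 1 ≤ b i) with hE | hgap
      · -- gap exactly 1, hE : a i + 1 = b i
        by_cases h1 : g1 a i = 1
        · by_cases h2 : g1 b i = -1
          · exfalso
            have hbn := (hb i).2
            have hain : a i < (n : ℤ) := by omega
            have h1b : 1 < b i := by have := (ha i).1; omega
            have HPOS : p1 a i = PISym.pos →
                p1 b i = PISym.pos ∨ p1 b i = PISym.zero ∨ p1 b i = PISym.sge := by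
              intro hpa
              obtain ⟨-, hstep⟩ := (hpm a a ha ha i).1 hpa le_rfl rfl
              have hc := hstep hain
              have hcj : ∀ j, (a + eVec k i) j = if j = i then a j + 1 else a j := by
                intro j
                simp only [Pi.add_apply, eVec]
                split <;> simp
              have hcg : inGrid n k (a + eVec k i) := by
                intro j
                have hj := ha j
                rw [hcj j]
                split
                · rename_i hji; subst hji; omega
                · exact hj
              have hcb : (a + eVec k i) ≤ b := by
                intro j
                rw [hcj j]
                split
                · rename_i hji; subst hji; exact le_of_eq hE
                · exact hab j
              have hcbi : b i = (a + eVec k i) i := by rw [hcj i]; simp; omega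
              simp only [Set.mem_insert_iff, Set.mem_singleton_iff] at hc
              rcases hc with hc | hc | hc
              · exact Or.inl ((hpm (a + eVec k i) b hcg hb i).1 hc hcb hcbi).1
              · have h3 := (hpm (a + eVec k i) b hcg hb i).2.2.2.1 hc hcb hcbi
                simp only [Set.mem_insert_iff, Set.mem_singleton_iff] at h3
                tauto
              · have h3 := (hpm (a + eVec k i) b hcg hb i).2.2.2.2.2 hc hcb hcbi
                simp only [Set.mem_insert_iff, Set.mem_singleton_iff] at h3
                tauto
            have HNEG : p1 b i = PISym.neg →
                p1 a i = PISym.neg ∨ p1 a i = PISym.zero ∨ p1 a i = PISym.sle := by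
              intro hpb'
              obtain ⟨-, hstep⟩ := (hpm b b hb hb i).2.1 hpb' le_rfl rfl
              have hd := hstep h1b
              have hdj : ∀ j, (b - eVec k i) j = if j = i then b j - 1 else b j := by
                intro j
                simp only [Pi.sub_apply, eVec]
                split <;> simp
              have hdg : inGrid n k (b - eVec k i) := by
                intro j
                have hj := hb j
                rw [hdj j]
                split
                · rename_i hji; subst hji; omega
                · exact hj
              have had : a ≤ (b - eVec k i) := by
                intro j
                rw [hdj j]
                split
                · rename_i hji; subst hji; exact le_sub_iff_add_le.mpr (le_of_eq hE)
                · exact hab j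
              have hdi : a i = (b - eVec k i) i := by rw [hdj i]; simp; omega
              simp only [Set.mem_insert_iff, Set.mem_singleton_iff] at hd
              rcases hd with hd | hd | hd
              · exact Or.inl ((hpm (b - eVec k i) a hdg ha i).2.1 hd had hdi).1
              · have h3 := (hpm (b - eVec k i) a hdg ha i).2.2.1 hd had hdi
                simp only [Set.mem_insert_iff, Set.mem_singleton_iff] at h3
                tauto
              · have h3 := (hpm (b - eVec k i) a hdg ha i).2.2.2.2.1 hd had hdi
                simp only [Set.mem_insert_iff, Set.mem_singleton_iff] at h3
                tauto
            have hm6 : (0 : ℤ) ≤ max (f1 b i) 0 := le_max_right _ _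
            have hFa := hF a ha i
            have hFb := hF b hb i
            cases hpa : p1 a i
            · simp only [hgneg, hgzero, hgpos, hgsge, hgsle, hgdia, hpa] at h1; omega
            · simp only [hgneg, hgzero, hgpos, hgsge, hgsle, hgdia, hpa] at h1; omega
            · rcases HPOS hpa with h | h | h <;> simp only [hgneg, hgzero, hgpos, hgsge, hgsle, hgdia, h] at h2 <;> omega
            · simp only [hgneg, hgzero, hgpos, hgsge, hgsle, hgdia, hpa] at h1
              have := min_le_right (f1 a i) 0
              omega
            · have hfa1 : f1 a i = 1 := by
                simp only [hgneg, hgzero, hgpos, hgsge, hgsle, hgdia, hpa] at h1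
                rcases max_choice (f1 a i) 0 with h | h <;> omega
              cases hpb : p1 b i
              · rcases HNEG hpb with h | h | h <;> rw [hpa] at h <;> exact PISym.noConfusion h
              · simp only [hgneg, hgzero, hgpos, hgsge, hgsle, hgdia, hpb] at h2; omega
              · simp only [hgneg, hgzero, hgpos, hgsge, hgsle, hgdia, hpb] at h2; omega
              · simp only [hgneg, hgzero, hgpos, hgsge, hgsle, hgdia, hpb] at h2
                rcases min_choice (f1 b i) 0 with h | h <;> omega
              · simp only [hgneg, hgzero, hgpos, hgsge, hgsle, hgdia, hpb] at h2; omega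
              · simp only [hgneg, hgzero, hgpos, hgsge, hgsle, hgdia, hpb] at h2; omega
            · have hfa1 : f1 a i = 1 := by simp only [hgneg, hgzero, hgpos, hgsge, hgsle, hgdia, hpa] at h1; omega
              cases hpb : p1 b i
              · rcases HNEG hpb with h | h | h <;> rw [hpa] at h <;> exact PISym.noConfusion h
              · simp only [hgneg, hgzero, hgpos, hgsge, hgsle, hgdia, hpb] at h2; omega
              · simp only [hgneg, hgzero, hgpos, hgsge, hgsle, hgdia, hpb] at h2; omega
              · simp only [hgneg, hgzero, hgpos, hgsge, hgsle, hgdia, hpb] at h2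
                rcases min_choice (f1 b i) 0 with h | h <;> omega
              · simp only [hgneg, hgzero, hgpos, hgsge, hgsle, hgdia, hpb] at h2; omega
              · simp only [hgneg, hgzero, hgpos, hgsge, hgsle, hgdia, hpb] at h2; omega
          · omega
        · omega
      · omega
  have hGrid : ∀ x, inGrid n k x → inGrid n k (x + g1 x) := by
    intro x hx j
    have hxj := hx j
    have hfj := hfg x hx j
    have hbd := hpb x hx j
    simp only [Pi.add_apply] at hfj ⊢
    cases hpj : p1 x j <;> simp only [hgneg, hgzero, hgpos, hgsge, hgsle, hgdia, hpj]
    · have hne : x j ≠ 1 := by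
        intro h
        have h2 := hbd.1 h
        rw [hpj] at h2
        simp at h2
      omega
    · omega
    · have hne : x j ≠ (n : ℤ) := by
        intro h
        have h2 := hbd.2 h
        rw [hpj] at h2
        simp at h2
      omega
    · have := min_le_right (f1 x j) 0
      rcases min_choice (f1 x j) 0 with h | h <;> omega
    · have := le_max_right (f1 x j) 0
      rcases max_choice (f1 x j) 0 with h | h <;> omega
    · exact hfj
  refine ⟨⟨?_, hGrid, ?_⟩, ?_⟩
  · intro x hx
    refine ⟨?_, (hfv x hx).2⟩
    intro i
    have hb := hF x hx i
    cases hpi : p1 x i <;> simp only [hgneg, hgzero, hgpos, hgsge, hgsle, hgdia, hpi]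
    all_goals
      first
        | tauto
        | (rcases min_choice (f1 x i) 0 with h | h <;> omega)
        | (rcases max_choice (f1 x i) 0 with h | h <;> omega)
  · intro a b ha hb hab
    refine ⟨?_, (hfm a b ha hb hab).2⟩
    intro i
    simp only [Pi.add_apply]
    exact key a b ha hb hab i
  · intro x hx
    constructor
    · intro i
      have hb := hF x hx i
      cases hpi : p1 x i <;> simp only [consS, hgneg, hgzero, hgpos, hgsge, hgsle, hgdia, hpi]
      all_goals
        first
          | trivial
          | (rcases min_choice (f1 x i) 0 with h | h <;> omega)
          | (rcases max_choice (f1 x i) 0 with h | h <;> omega)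
    · rcases hp2v x hx with h | h | h <;> rw [h]
      · exact (hcons x hx).1 h
      · exact (hcons x hx).2 h
      · trivial
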